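/- Every polynomial f(x) ∈ 𝕆[x] over the real octonion division algebra 𝕆 of degree at least 1 has a root in 𝕆. -/

import Mathlib

/-- Cayley–Dickson double (with γ = -1) of an algebra with involution. -/
def CD (A : Type*) : Type _ := A × A

namespace CD

variable {A : Type*}

instance [AddCommGroup A] : AddCommGroup (CD A) := inferInstanceAs (AddCommGroup (A × A))
noncomputable instance [AddCommGroup A] [Module ℝ A] : Module ℝ (CD A) :=
  inferInstanceAs (Module ℝ (A × A))

/-- Build an element of the double from its two halves. -/
def mk (a b : A) : CD A := (a, b)

section
set_option linter.unusedSectionVars false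

/-- A star operation fixing `1`. -/
class StarOne (A : Type*) [One A] [Star A] : Prop where
  star_one : star (1 : A) = 1

variable [NonAssocRing A] [StarAddMonoid A] [StarOne A]

instance : One (CD A) := ⟨((1 : A), 0)⟩
instance : Mul (CD A) :=
  ⟨fun x y => (x.1 * y.1 - star y.2 * x.2, y.2 * x.1 + x.2 * star y.1)⟩
instance : Star (CD A) := ⟨fun x => (star x.1, -x.2)⟩

lemma mul_def (x y : CD A) :
    x * y = (x.1 * y.1 - star y.2 * x.2, y.2 * x.1 + x.2 * star y.1) := rfl
lemma one_def : (1 : CD A) = ((1 : A), 0) := rfl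
lemma star_def (x : CD A) : star x = (star x.1, -x.2) := rfl
lemma add_def (x y : CD A) : x + y = (x.1 + y.1, x.2 + y.2) := rfl
lemma zero_def : (0 : CD A) = ((0 : A), 0) := rfl

instance instNonAssocRing : NonAssocRing (CD A) where
  __ := (inferInstance : AddCommGroup (CD A))
  left_distrib a b c := by
    show ((a.1 * (b.1 + c.1) - star (b.2 + c.2) * a.2,
      (b.2 + c.2) * a.1 + a.2 * star (b.1 + c.1)) : A × A) =
      ((a.1 * b.1 - star b.2 * a.2) + (a.1 * c.1 - star c.2 * a.2),
        (b.2 * a.1 + a.2 * star b.1) + (c.2 * a.1 + a.2 * star c.1))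
    refine Prod.ext ?_ ?_ <;>
      simp [mul_add, add_mul, star_add] <;> abel
  right_distrib a b c := by
    show (((a.1 + b.1) * c.1 - star c.2 * (a.2 + b.2),
      c.2 * (a.1 + b.1) + (a.2 + b.2) * star c.1) : A × A) =
      ((a.1 * c.1 - star c.2 * a.2) + (b.1 * c.1 - star c.2 * b.2),
        (c.2 * a.1 + a.2 * star c.1) + (c.2 * b.1 + b.2 * star c.1))
    refine Prod.ext ?_ ?_ <;>
      simp [mul_add, add_mul, star_add] <;> abel
  zero_mul a := by
    show (((0 : A) * a.1 - star a.2 * 0, a.2 * 0 + 0 * star a.1) : A × A) = ((0 : A), (0 : A))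
    refine Prod.ext ?_ ?_ <;> simp
  mul_zero a := by
    show ((a.1 * 0 - star (0 : A) * a.2, (0 : A) * a.1 + a.2 * star 0) : A × A) = ((0 : A), (0 : A))
    refine Prod.ext ?_ ?_ <;> simp
  one_mul a := by
    show (((1 : A) * a.1 - star a.2 * 0, a.2 * 1 + 0 * star a.1) : A × A) = a
    refine Prod.ext ?_ ?_ <;> simp
  mul_one a := by
    show ((a.1 * 1 - star (0 : A) * a.2, (0 : A) * a.1 + a.2 * star 1) : A × A) = a
    refine Prod.ext ?_ ?_ <;> simp [StarOne.star_one]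

instance instStarAddMonoid : StarAddMonoid (CD A) where
  star_involutive x := by
    show ((star (star x.1), - -x.2) : A × A) = x
    refine Prod.ext ?_ ?_ <;> simp
  star_add x y := by
    show ((star (x.1 + y.1), -(x.2 + y.2)) : A × A) = (star x.1 + star y.1, -x.2 + -y.2)
    refine Prod.ext ?_ ?_ <;> simp [add_comm]

instance instStarOne : StarOne (CD A) :=
  ⟨Prod.ext (StarOne.star_one) (by show -(0 : A) = 0; simp)⟩

end

end CD

instance : CD.StarOne ℝ := ⟨by simp⟩

/-- The real octonions, as a three-fold Cayley–Dickson double of ℝ. -/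
def Octonion : Type := CD (CD (CD ℝ))

instance : NonAssocRing Octonion := inferInstanceAs (NonAssocRing (CD (CD (CD ℝ))))
instance : StarAddMonoid Octonion := inferInstanceAs (StarAddMonoid (CD (CD (CD ℝ))))
instance : CD.StarOne Octonion := inferInstanceAs (CD.StarOne (CD (CD (CD ℝ))))
noncomputable instance : Module ℝ Octonion := inferInstanceAs (Module ℝ (CD (CD (CD ℝ))))

/-- The real sedenions, as the Cayley–Dickson double of the octonions. -/
def Sedenion : Type := CD Octonion

instance : NonAssocRing Sedenion := inferInstanceAs (NonAssocRing (CD Octonion))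
instance : StarAddMonoid Sedenion := inferInstanceAs (StarAddMonoid (CD Octonion))
instance : CD.StarOne Sedenion := inferInstanceAs (CD.StarOne (CD Octonion))
noncomputable instance : Module ℝ Sedenion := inferInstanceAs (Module ℝ (CD Octonion))

/-- Assemble a complex number, quaternion, octonion, sedenion from real coordinates. -/
def mkC (f : ℕ → ℝ) (k : ℕ) : CD ℝ := CD.mk (f k) (f (k+1))
def mkH (f : ℕ → ℝ) (k : ℕ) : CD (CD ℝ) := CD.mk (mkC f k) (mkC f (k+2))
def mkO (f : ℕ → ℝ) (k : ℕ) : Octonion := CD.mk (mkH f k) (mkH f (k+4))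
def mkS (f : ℕ → ℝ) : Sedenion := CD.mk (mkO f 0) (mkO f 8)

/-- The standard basis `e₀, …, e₁₅` of the sedenions. -/
def sE (n : ℕ) : Sedenion := mkS (fun k => if k = n then 1 else 0)

/-- The standard basis `e₀, …, e₇` of the octonions. -/
def oE (n : ℕ) : Octonion := mkO (fun k => if k = n then 1 else 0) 0

/-- Powers in a (power-associative) non-associative algebra. -/
def cdpow {A : Type*} [One A] [Mul A] (x : A) : ℕ → A
  | 0 => 1
  | n+1 => cdpow x n * x

/-!
The companion polynomial `C_f = ∑ ⟨cᵢ, cⱼ⟩ X^(i+j)` of `f = ∑ cᵢ Xⁱ` has real coefficients and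
degree `2n`, so it has a complex root `z`; put `t = 2 Re z` and `N = |z|²`. Modulo
`X² - t X + N` we have `f ≡ u + w X` for octonions `u, w`, so `f(x) = u + w x` for every octonion
`x` of trace `t` and norm `N`, and likewise `C_f(z) = |u|² + 2⟨u, w⟩ z + |w|² z²`.
If `z` is real, `C_f(z) = |u + z w|²`, so `u = -z w`. Otherwise `C_f(z) = 0` forces
`⟨w, u⟩ = -(Re z) |w|²` and `|u|² = |z|² |w|²`. Either way `x = -w̄ u / |w|²` has trace `t` and
norm `N` and, by alternativity, `w x = -u`; if `w = 0` then `u = 0` and any `x` of trace `t` and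
norm `N` is a root.
-/

lemma cdpow_eq_pow {M : Type*} [Monoid M] (x : M) (k : ℕ) : cdpow x k = x ^ k := by
  induction k with
  | zero => rw [cdpow, pow_zero]
  | succ k ih => rw [cdpow, ih, pow_succ]

section QuadraticRemainder

variable {R : Type*} [CommRing R]

/-- `X ^ k ≡ p + q X` modulo `X² - t X + N`, where `(p, q) = quadRemPow t N k`. -/
def quadRemPow (t N : R) : ℕ → R × R
  | 0 => (1, 0)
  | k + 1 => (-N * (quadRemPow t N k).2, (quadRemPow t N k).1 + t * (quadRemPow t N k).2)

/-- `∑ i ≤ n, cᵢ Xⁱ ≡ u + w X` modulo `X² - t X + N`, where `(u, w) = quadRem t N c n`. -/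
def quadRem {V : Type*} [AddCommGroup V] [Module R V] (t N : R) (c : ℕ → V) (n : ℕ) : V × V :=
  (∑ i ∈ Finset.range (n + 1), (quadRemPow t N i).1 • c i,
    ∑ i ∈ Finset.range (n + 1), (quadRemPow t N i).2 • c i)

variable {A : Type*} [NonAssocRing A] [Module R A] [IsScalarTower R A A] {t N : R} {a : A}

lemma cdpow_eq_quadRemPow (ha : a * a = t • a - N • 1) (k : ℕ) :
    cdpow a k = (quadRemPow t N k).1 • 1 + (quadRemPow t N k).2 • a := by
  induction k with
  | zero => simp [cdpow, quadRemPow]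
  | succ k ih =>
    rw [cdpow, ih, add_mul, smul_mul_assoc, smul_mul_assoc, one_mul, ha, quadRemPow]
    module

lemma sum_mul_cdpow_eq_quadRem [SMulCommClass R A A] (ha : a * a = t • a - N • 1)
    (c : ℕ → A) (n : ℕ) :
    ∑ i ∈ Finset.range (n + 1), c i * cdpow a i =
      (quadRem t N c n).1 + (quadRem t N c n).2 * a := by
  simp only [quadRem, Finset.sum_mul, ← Finset.sum_add_distrib, cdpow_eq_quadRemPow ha, mul_add,
    mul_smul_comm, mul_one, smul_mul_assoc]

end QuadraticRemainder

section CompanionPolynomial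

open Polynomial

variable {R V : Type*} [CommRing R] [AddCommGroup V] [Module R V]
  (B : V →ₗ[R] V →ₗ[R] R) (c : ℕ → V) (n : ℕ)

/-- For `B x y = Re (x ȳ)` this is `f f̄` with `f = ∑ cᵢ Xⁱ`: the coefficient `∑_{i+j=k} cᵢ c̄ⱼ`
of `f f̄` is real, namely `∑_{i+j=k} B cᵢ cⱼ`. -/
noncomputable def companionPoly : R[X] :=
  ∑ i ∈ Finset.range (n + 1), ∑ j ∈ Finset.range (n + 1), C (B (c i) (c j)) * X ^ (i + j)

lemma coeff_companionPoly_two_mul : (companionPoly B c n).coeff (2 * n) = B (c n) (c n) := by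
  have hlt {i j : ℕ} (hi : i ∈ Finset.range (n + 1)) (hj : j ∈ Finset.range (n + 1))
      (hij : i ≠ n ∨ j ≠ n) : 2 * n ≠ i + j := by
    simp only [Finset.mem_range] at hi hj; omega
  simp only [companionPoly, finsetSum_coeff, coeff_C_mul, coeff_X_pow]
  rw [Finset.sum_eq_single n, Finset.sum_eq_single n, if_pos (two_mul n), mul_one]
  · exact fun j hj hjn => by rw [if_neg (hlt (by simp) hj (.inr hjn)), mul_zero]
  · simp
  · exact fun i hi hin => Finset.sum_eq_zero fun j hj => by
      rw [if_neg (hlt hi hj (.inl hin)), mul_zero]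
  · simp

lemma degree_companionPoly_pos (hn : 1 ≤ n) (hc : B (c n) (c n) ≠ 0) :
    0 < (companionPoly B c n).degree := by
  have h := le_degree_of_ne_zero ((coeff_companionPoly_two_mul B c n).trans_ne hc)
  exact lt_of_lt_of_le (by exact_mod_cast (by omega : 0 < 2 * n)) h

lemma apply_sum_smul_sum_smul (s : Finset ℕ) (f g : ℕ → R) :
    B (∑ i ∈ s, f i • c i) (∑ j ∈ s, g j • c j) = ∑ i ∈ s, ∑ j ∈ s, f i * g j * B (c i) (c j) := by
  simp only [map_sum, LinearMap.sum_apply, map_smul, LinearMap.smul_apply, smul_eq_mul,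
    Finset.mul_sum]
  rw [Finset.sum_comm]
  exact Finset.sum_congr rfl fun i _ => Finset.sum_congr rfl fun j _ => by ring

lemma aeval_companionPoly {S : Type*} [CommRing S] [Algebra R S] {t N : R} {z : S}
    (hz : z * z = t • z - N • 1) :
    aeval z (companionPoly B c n) =
      B (quadRem t N c n).1 (quadRem t N c n).1 • 1
        + (B (quadRem t N c n).1 (quadRem t N c n).2
            + B (quadRem t N c n).2 (quadRem t N c n).1) • z
        + B (quadRem t N c n).2 (quadRem t N c n).2 • (z * z) := by
  have hpow (k : ℕ) : z ^ k = (quadRemPow t N k).1 • 1 + (quadRemPow t N k).2 • z := by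
    rw [← cdpow_eq_pow, cdpow_eq_quadRemPow (R := R) (A := S) hz]
  simp only [quadRem, apply_sum_smul_sum_smul]
  simp only [companionPoly, map_sum, aeval_C, aeval_X_pow, aeval_mul,
    Finset.sum_smul, ← Finset.sum_add_distrib, pow_add, hpow]
  refine Finset.sum_congr rfl fun i _ => Finset.sum_congr rfl fun j _ => ?_
  simp only [Algebra.smul_def, map_mul, map_add, mul_one]
  ring

end CompanionPolynomial

namespace CD

section
variable {A : Type*} [NonAssocRing A]

@[simp] lemma fst_one : (1 : CD A).1 = 1 := rfl
@[simp] lemma snd_one : (1 : CD A).2 = 0 := rfl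

variable [StarAddMonoid A]

@[simp] lemma fst_mul (x y : CD A) : (x * y).1 = x.1 * y.1 - star y.2 * x.2 := rfl
@[simp] lemma snd_mul (x y : CD A) : (x * y).2 = y.2 * x.1 + x.2 * star y.1 := rfl
@[simp] lemma fst_star (x : CD A) : (star x).1 = star x.1 := rfl
@[simp] lemma snd_star (x : CD A) : (star x).2 = -x.2 := rfl

end

variable {A : Type*} [AddCommGroup A]

@[simp] lemma fst_add (x y : CD A) : (x + y).1 = x.1 + y.1 := rfl
@[simp] lemma snd_add (x y : CD A) : (x + y).2 = x.2 + y.2 := rfl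
@[simp] lemma fst_sub (x y : CD A) : (x - y).1 = x.1 - y.1 := rfl
@[simp] lemma snd_sub (x y : CD A) : (x - y).2 = x.2 - y.2 := rfl
@[simp] lemma fst_neg (x : CD A) : (-x).1 = -x.1 := rfl
@[simp] lemma snd_neg (x : CD A) : (-x).2 = -x.2 := rfl
@[simp] lemma fst_zero : (0 : CD A).1 = 0 := rfl
@[simp] lemma snd_zero : (0 : CD A).2 = 0 := rfl
@[simp] lemma fst_smul [Module ℝ A] (r : ℝ) (x : CD A) : (r • x).1 = r • x.1 := rfl
@[simp] lemma snd_smul [Module ℝ A] (r : ℝ) (x : CD A) : (r • x).2 = r • x.2 := rfl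

end CD

namespace Octonion

@[simp] lemma fst_mul (x y : Octonion) : (x * y).1 = x.1 * y.1 - star y.2 * x.2 := rfl
@[simp] lemma snd_mul (x y : Octonion) : (x * y).2 = y.2 * x.1 + x.2 * star y.1 := rfl
@[simp] lemma fst_star (x : Octonion) : (star x).1 = star x.1 := rfl
@[simp] lemma snd_star (x : Octonion) : (star x).2 = -x.2 := rfl
@[simp] lemma fst_one : (1 : Octonion).1 = 1 := rfl
@[simp] lemma snd_one : (1 : Octonion).2 = 0 := rfl
@[simp] lemma fst_add (x y : Octonion) : (x + y).1 = x.1 + y.1 := rfl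
@[simp] lemma snd_add (x y : Octonion) : (x + y).2 = x.2 + y.2 := rfl
@[simp] lemma fst_sub (x y : Octonion) : (x - y).1 = x.1 - y.1 := rfl
@[simp] lemma snd_sub (x y : Octonion) : (x - y).2 = x.2 - y.2 := rfl
@[simp] lemma fst_neg (x : Octonion) : (-x).1 = -x.1 := rfl
@[simp] lemma snd_neg (x : Octonion) : (-x).2 = -x.2 := rfl
@[simp] lemma fst_zero : (0 : Octonion).1 = 0 := rfl
@[simp] lemma snd_zero : (0 : Octonion).2 = 0 := rfl
@[simp] lemma fst_smul (r : ℝ) (x : Octonion) : (r • x).1 = r • x.1 := rfl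
@[simp] lemma snd_smul (r : ℝ) (x : Octonion) : (r • x).2 = r • x.2 := rfl

lemma ext_coords {x y : Octonion}
    (h₀ : x.1.1.1 = y.1.1.1) (h₁ : x.1.1.2 = y.1.1.2) (h₂ : x.1.2.1 = y.1.2.1)
    (h₃ : x.1.2.2 = y.1.2.2) (h₄ : x.2.1.1 = y.2.1.1) (h₅ : x.2.1.2 = y.2.1.2)
    (h₆ : x.2.2.1 = y.2.2.1) (h₇ : x.2.2.2 = y.2.2.2) : x = y :=
  Prod.ext (Prod.ext (Prod.ext h₀ h₁) (Prod.ext h₂ h₃)) (Prod.ext (Prod.ext h₄ h₅) (Prod.ext h₆ h₇))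

instance : IsScalarTower ℝ Octonion Octonion :=
  ⟨fun r x y => by apply ext_coords <;> simp <;> ring⟩

instance : SMulCommClass ℝ Octonion Octonion :=
  ⟨fun r x y => by apply ext_coords <;> simp <;> ring⟩

def re (x : Octonion) : ℝ := x.1.1.1

noncomputable def dot : Octonion →ₗ[ℝ] Octonion →ₗ[ℝ] ℝ :=
  LinearMap.mk₂ ℝ
    (fun x y => x.1.1.1 * y.1.1.1 + x.1.1.2 * y.1.1.2 + x.1.2.1 * y.1.2.1 + x.1.2.2 * y.1.2.2
      + x.2.1.1 * y.2.1.1 + x.2.1.2 * y.2.1.2 + x.2.2.1 * y.2.2.1 + x.2.2.2 * y.2.2.2)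
    (fun _ _ _ => by simp; ring) (fun _ _ _ => by simp; ring)
    (fun _ _ _ => by simp; ring) (fun _ _ _ => by simp; ring)

lemma dot_apply (x y : Octonion) : dot x y =
    x.1.1.1 * y.1.1.1 + x.1.1.2 * y.1.1.2 + x.1.2.1 * y.1.2.1 + x.1.2.2 * y.1.2.2
      + x.2.1.1 * y.2.1.1 + x.2.1.2 * y.2.1.2 + x.2.2.1 * y.2.2.1 + x.2.2.2 * y.2.2.2 := rfl

lemma dot_comm (x y : Octonion) : dot x y = dot y x := by
  simp only [dot_apply]; ring

lemma eq_zero_of_dot_self_eq_zero {x : Octonion} (h : dot x x = 0) : x = 0 := by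
  rw [dot_apply] at h
  apply ext_coords <;> simp <;> nlinarith [sq_nonneg x.1.1.1, sq_nonneg x.1.1.2,
    sq_nonneg x.1.2.1, sq_nonneg x.1.2.2, sq_nonneg x.2.1.1, sq_nonneg x.2.1.2,
    sq_nonneg x.2.2.1, sq_nonneg x.2.2.2]

lemma dot_star_self (x : Octonion) : dot (star x) (star x) = dot x x := by
  simp [dot_apply]

lemma re_star_mul (x y : Octonion) : re (star x * y) = dot x y := by
  simp [re, dot_apply]; ring

lemma dot_mul_self (x y : Octonion) : dot (x * y) (x * y) = dot x x * dot y y := by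
  simp [dot_apply]; ring

lemma mul_star_mul (x y : Octonion) : x * (star x * y) = dot x x • y := by
  apply ext_coords <;> simp [dot_apply] <;> ring

lemma mul_self_eq (x : Octonion) : x * x = (2 * re x) • x - dot x x • 1 := by
  apply ext_coords <;> simp [re, dot_apply] <;> ring

lemma exists_re_dot_self_eq (z : ℂ) : ∃ x : Octonion, re x = z.re ∧ dot x x = Complex.normSq z :=
  ⟨(((z.re, z.im), 0), 0), rfl, (dot_apply _ _).trans (by simp [Complex.normSq_apply])⟩

lemma exists_re_dot_self_eq_and_add_mul_eq_zero {u w : Octonion} {z : ℂ}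
    (hwu : dot w u = -z.re * dot w w) (huu : dot u u = Complex.normSq z * dot w w) :
    ∃ x : Octonion, re x = z.re ∧ dot x x = Complex.normSq z ∧ u + w * x = 0 := by
  by_cases hw : w = 0
  · obtain ⟨x, hre, hx⟩ := exists_re_dot_self_eq z
    have hu : u = 0 := eq_zero_of_dot_self_eq_zero (by simpa [hw] using huu)
    exact ⟨x, hre, hx, by simp [hu, hw]⟩
  have hww : dot w w ≠ 0 := fun h => hw (eq_zero_of_dot_self_eq_zero h)
  refine ⟨-(dot w w)⁻¹ • (star w * u), ?_, ?_, ?_⟩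
  · have hre : re (-(dot w w)⁻¹ • (star w * u)) = -(dot w w)⁻¹ * re (star w * u) := by
      simp [re]
    rw [hre, re_star_mul, hwu]
    field_simp
  · simp only [map_smul, LinearMap.smul_apply, smul_eq_mul, dot_mul_self, dot_star_self, huu]
    field_simp
  · rw [mul_smul_comm, mul_star_mul, smul_smul, neg_mul, inv_mul_cancel₀ hww, neg_smul, one_smul,
      add_neg_cancel]

lemma dot_eq_of_companion_root {u w : Octonion} {z : ℂ}
    (hz : dot u u • (1 : ℂ) + (dot u w + dot w u) • z + dot w w • (z * z) = 0) :
    dot w u = -z.re * dot w w ∧ dot u u = Complex.normSq z * dot w w := by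
  have hre := congrArg Complex.re hz
  have him := congrArg Complex.im hz
  simp only [Complex.add_re, Complex.add_im, Complex.real_smul, Complex.mul_re, Complex.mul_im,
    Complex.ofReal_re, Complex.ofReal_im, Complex.one_re, Complex.one_im, Complex.zero_re,
    Complex.zero_im, dot_comm u w] at hre him
  rw [Complex.normSq_apply]
  by_cases hb : z.im = 0
  · have hsq : dot (u + z.re • w) (u + z.re • w) = 0 := by
      simp only [map_add, map_smul, LinearMap.add_apply, LinearMap.smul_apply, smul_eq_mul,
        dot_comm u w, hb] at hre ⊢
      linarith
    have hu : u = -(z.re • w) := eq_neg_of_add_eq_zero_left (eq_zero_of_dot_self_eq_zero hsq)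
    simp only [hu, hb, map_neg, map_smul, LinearMap.neg_apply, LinearMap.smul_apply, smul_eq_mul]
    constructor <;> ring
  · have hwu : dot w u = -z.re * dot w w := by
      apply mul_left_cancel₀ hb
      linear_combination him / 2
    exact ⟨hwu, by linear_combination hre - 2 * z.re * hwu⟩

end Octonion

/-- Every (left) polynomial `f(x) = Σ_{i ≤ n} cᵢ xⁱ` of degree `n ≥ 1`
(leading coefficient `c n ≠ 0`) over the real octonion division algebra `𝕆` has a root
in `𝕆`. -/
theorem stmt7 (n : ℕ) (hn : 1 ≤ n) (c : ℕ → Octonion) (hc : c n ≠ 0) :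
    ∃ x : Octonion, ∑ i ∈ Finset.range (n + 1), c i * cdpow x i = 0 := by
  obtain ⟨z, hz⟩ := IsAlgClosed.exists_aeval_eq_zero ℂ (companionPoly Octonion.dot c n)
    (degree_companionPoly_pos _ c n hn (mt Octonion.eq_zero_of_dot_self_eq_zero hc)).ne'
  have hzz : z * z = (2 * z.re) • z - Complex.normSq z • 1 := by
    rw [Complex.real_smul, Complex.real_smul, ← Complex.add_conj, Complex.normSq_eq_conj_mul_self]
    ring
  rw [aeval_companionPoly _ c n hzz] at hz
  obtain ⟨hwu, huu⟩ := Octonion.dot_eq_of_companion_root hz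
  obtain ⟨x, hre, hnorm, hx⟩ := Octonion.exists_re_dot_self_eq_and_add_mul_eq_zero hwu huu
  have hxx : x * x = (2 * z.re) • x - Complex.normSq z • 1 := by
    rw [Octonion.mul_self_eq, hre, hnorm]
  exact ⟨x, (sum_mul_cdpow_eq_quadRem hxx c n).trans hx⟩
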